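/- If h₁, h₂ ∈ C(K) satisfy Ψ(h₁) = h₁ and Ψ(h₂) = h₂, then the sequence {Ψ^n(h₁h₂)}_{n≥1} converges uniformly on K. -/

import Mathlib

open MeasureTheory Filter Topology ComplexOrder

/-- `Φ` is a Markov operator on the bounded Borel measurable functions on `U`:
for each `x` there is a Borel probability measure `P x` representing `Φ` at `x`. -/
def IsMarkovOperator {U : Type*} [MeasurableSpace U]
    (Φ : (U → ℂ) → (U → ℂ)) : Prop :=
  ∀ x : U, ∃ P : Measure U, IsProbabilityMeasure P ∧
    ∀ f : U → ℂ, Measurable f → (∃ C : ℝ, ∀ y, ‖f y‖ ≤ C) →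
      Φ f x = ∫ y, f y ∂P

/-- `Φ` has the strong Feller property: it maps bounded Borel measurable
functions to continuous functions. -/
def HasStrongFeller {U : Type*} [MeasurableSpace U] [TopologicalSpace U]
    (Φ : (U → ℂ) → (U → ℂ)) : Prop :=
  ∀ f : U → ℂ, Measurable f → (∃ C : ℝ, ∀ y, ‖f y‖ ≤ C) → Continuous (Φ f)

/-- Boundary condition (A): for each boundary point `x` there is a barrier
`h ∈ C(K)` with `h x = 0`, `h < 0` off `x`, and `Φ (h_U) ≥ h_U` on `U`. -/
def CondA {K : Type*} [TopologicalSpace K] (U : Set K)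
    (Φ : (↥U → ℂ) → (↥U → ℂ)) : Prop :=
  ∀ x ∈ Uᶜ, ∃ h : C(K, ℂ), h x = 0 ∧ (∀ y : K, y ≠ x → h y < 0) ∧
    ∀ u : ↥U, h u.1 ≤ Φ (fun v : ↥U => h v.1) u

/-- Maximum principle (B): every real-valued `g ∈ C(K)` with `Φ (g_U) ≥ g_U`
on `U` attaining its global maximum inside `U` is constant. -/
def CondB {K : Type*} [TopologicalSpace K] (U : Set K)
    (Φ : (↥U → ℂ) → (↥U → ℂ)) : Prop :=
  ∀ g : C(K, ℂ), (∀ x : K, (g x).im = 0) →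
    (∀ u : ↥U, g u.1 ≤ Φ (fun v : ↥U => g v.1) u) →
    (∃ z ∈ U, ∀ x : K, g x ≤ g z) →
    ∀ x y : K, g x = g y

/-- The map `Ψ` : `Ψ f = Φ (f_U)` on `U` and `Ψ f = f` on `∂U = K \ U`. -/
noncomputable def psiFun {K : Type*} (U : Set K)
    (Φ : (↥U → ℂ) → (↥U → ℂ)) (f : K → ℂ) : K → ℂ :=
  open Classical in fun x => if hx : x ∈ U then Φ (fun v : ↥U => f v.1) ⟨x, hx⟩ else f x

/-!
For `w ∈ C(K)` fixed by `Ψ`, Jensen's inequality gives `|w|² ≤ Ψ(|w|²)`, so by positivity of `Ψ`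
the iterates `Ψⁿ(|w|²)` increase, and they are bounded by `‖w‖²`. Their pointwise limit is
`Ψ`-invariant by dominated convergence, hence continuous on `U` by the strong Feller property; it
is continuous at boundary points because the barriers of condition (A) give bounds
`|Ψⁿ f y - f x| ≤ ε - b Re h(y)` uniform in `n`. Dini's theorem makes the convergence uniform.
Since `Ψ` commutes with conjugation, every `h₁ + iᵏ h̄₂` is fixed, and the polarization identity
`4 h₁ h₂ = ∑ₖ iᵏ |h₁ + iᵏ h̄₂|²` reduces the theorem to this case.
-/

open scoped ComplexConjugate

namespace Module.End

variable {R M : Type*} [Semiring R] [AddCommMonoid M] [Module R M] [TopologicalSpace M]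
  [ContinuousAdd M] [ContinuousConstSMul R M]

def convergentOrbits (T : Module.End R M) : Submodule R M where
  carrier := {x | ∃ p, Tendsto (fun n => (T ^ n) x) atTop (𝓝 p)}
  zero_mem' := ⟨0, by simpa using tendsto_const_nhds⟩
  add_mem' := fun ⟨p, hp⟩ ⟨q, hq⟩ => ⟨p + q, by simpa using hp.add hq⟩
  smul_mem' c _ := fun ⟨p, hp⟩ => ⟨c • p, by simpa using hp.const_smul c⟩

end Module.End

namespace Complex

theorem exists_tendsto_of_monotone {a : ℕ → ℂ} (ha : Monotone a) {C : ℝ} (hC : ∀ n, ‖a n‖ ≤ C) :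
    ∃ l, Tendsto a atTop (𝓝 l) := by
  have hre : Monotone fun n => (a n).re := fun m n hmn => (le_def.mp (ha hmn)).1
  have him (n : ℕ) : (a n).im = (a 0).im := ((le_def.mp (ha (Nat.zero_le n))).2).symm
  have hbdd : BddAbove (Set.range fun n => (a n).re) :=
    ⟨C, by rintro _ ⟨n, rfl⟩; exact (re_le_norm _).trans (hC n)⟩
  refine ⟨_, ((tendsto_atTop_ciSup hre hbdd).ofReal.add
    (tendsto_const_nhds (x := ((a 0).im : ℂ) * I))).congr fun n => ?_⟩
  rw [← him n]
  exact re_add_im (a n)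

theorem mul_eq_sum_mul_conj (z w : ℂ) :
    z * w = ∑ k ∈ Finset.range 4,
      I ^ k / 4 * ((z + I ^ k * conj w) * conj (z + I ^ k * conj w)) := by
  simp only [Finset.sum_range_succ, Finset.sum_range_zero, pow_zero, pow_one, I_sq, I_pow_three,
    map_add, map_mul, map_neg, map_one, conj_conj, conj_I]
  ring_nf
  simp only [I_sq]
  ring

/-- Dini's theorem for the partial order on `ℂ`. -/
theorem tendstoUniformly_of_monotone {K : Type*} [TopologicalSpace K] [CompactSpace K]
    {F : ℕ → K → ℂ} {G : K → ℂ} (hF : ∀ n, Continuous (F n)) (hmono : Monotone F)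
    (hG : Continuous G) (hlim : ∀ y, Tendsto (fun n => F n y) atTop (𝓝 (G y))) :
    TendstoUniformly F G atTop := by
  have him (n : ℕ) (y : K) : (F n y).im = (G y).im := by
    have hconst (m : ℕ) : (F m y).im = (F n y).im := by
      rw [← (le_def.mp (hmono (Nat.zero_le m) y)).2, ← (le_def.mp (hmono (Nat.zero_le n) y)).2]
    exact tendsto_nhds_unique (tendsto_const_nhds.congr fun m => (hconst m).symm)
      ((continuous_im.tendsto _).comp (hlim y))
  have hre := Monotone.tendstoUniformly_of_forall_tendsto (F := fun n y => (F n y).re)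
    (fun n => continuous_re.comp (hF n)) (fun m n hmn y => (le_def.mp (hmono hmn y)).1)
    (continuous_re.comp hG) (fun y => (continuous_re.tendsto _).comp (hlim y))
  rw [Metric.tendstoUniformly_iff] at hre ⊢
  intro ε hε
  filter_upwards [hre ε hε] with n hn y
  rw [dist_of_im_eq (him n y).symm]
  exact hn y

end Complex

namespace IsMarkovOperator

variable {U : Type*} [MeasurableSpace U] {Φ : (U → ℂ) → (U → ℂ)} {f g : U → ℂ}

theorem map_add (hM : IsMarkovOperator Φ) (hf : Measurable f) (hfb : ∃ C, ∀ y, ‖f y‖ ≤ C)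
    (hg : Measurable g) (hgb : ∃ C, ∀ y, ‖g y‖ ≤ C) (x : U) :
    Φ (fun y => f y + g y) x = Φ f x + Φ g x := by
  obtain ⟨P, _, hP⟩ := hM x
  obtain ⟨C, hC⟩ := hfb
  obtain ⟨D, hD⟩ := hgb
  rw [hP (fun y => f y + g y) (hf.add hg) ⟨C + D, fun y => norm_add_le_of_le (hC y) (hD y)⟩,
    hP f hf ⟨C, hC⟩, hP g hg ⟨D, hD⟩]
  exact integral_add (.of_bound hf.aestronglyMeasurable C (ae_of_all _ hC))
    (.of_bound hg.aestronglyMeasurable D (ae_of_all _ hD))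

theorem map_const_mul (hM : IsMarkovOperator Φ) (hf : Measurable f)
    (hfb : ∃ C, ∀ y, ‖f y‖ ≤ C) (c : ℂ) (x : U) : Φ (fun y => c * f y) x = c * Φ f x := by
  obtain ⟨P, _, hP⟩ := hM x
  obtain ⟨C, hC⟩ := hfb
  rw [hP _ (hf.const_mul c) ⟨‖c‖ * C, fun y => by rw [norm_mul]; gcongr; exact hC y⟩,
    hP f hf ⟨C, hC⟩]
  exact integral_const_mul c f

theorem map_conj (hM : IsMarkovOperator Φ) (hf : Measurable f) (hfb : ∃ C, ∀ y, ‖f y‖ ≤ C)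
    (x : U) : Φ (fun y => conj (f y)) x = conj (Φ f x) := by
  obtain ⟨P, _, hP⟩ := hM x
  obtain ⟨C, hC⟩ := hfb
  rw [hP (fun y => conj (f y)) (Complex.continuous_conj.measurable.comp hf)
    ⟨C, fun y => by simpa using hC y⟩, hP f hf ⟨C, hC⟩]
  exact integral_conj

theorem mono (hM : IsMarkovOperator Φ) (hf : Measurable f) (hfb : ∃ C, ∀ y, ‖f y‖ ≤ C)
    (hg : Measurable g) (hgb : ∃ C, ∀ y, ‖g y‖ ≤ C) (hfg : f ≤ g) (x : U) : Φ f x ≤ Φ g x := by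
  obtain ⟨P, _, hP⟩ := hM x
  obtain ⟨C, hC⟩ := hfb
  obtain ⟨D, hD⟩ := hgb
  rw [hP f hf ⟨C, hC⟩, hP g hg ⟨D, hD⟩]
  exact integral_mono (.of_bound hf.aestronglyMeasurable C (ae_of_all _ hC))
    (.of_bound hg.aestronglyMeasurable D (ae_of_all _ hD)) hfg

theorem norm_le (hM : IsMarkovOperator Φ) (hf : Measurable f) {C : ℝ} (hC : ∀ y, ‖f y‖ ≤ C)
    (x : U) : ‖Φ f x‖ ≤ C := by
  obtain ⟨P, _, hP⟩ := hM x
  rw [hP f hf ⟨C, hC⟩]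
  simpa using norm_integral_le_of_norm_le_const (μ := P) (ae_of_all _ hC)

/-- Jensen's inequality for the convex function `z ↦ ‖z‖²`. -/
theorem mul_conj_le (hM : IsMarkovOperator Φ) (hf : Measurable f) (hfb : ∃ C, ∀ y, ‖f y‖ ≤ C)
    (x : U) : Φ f x * conj (Φ f x) ≤ Φ (fun y => f y * conj (f y)) x := by
  obtain ⟨P, _, hP⟩ := hM x
  obtain ⟨C, hC⟩ := hfb
  have hsq : Measurable fun y => f y * conj (f y) :=
    hf.mul (Complex.continuous_conj.measurable.comp hf)
  rw [hP _ hsq ⟨C * C, fun y => by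
      rw [norm_mul, Complex.norm_conj]; exact mul_self_le_mul_self (norm_nonneg _) (hC y)⟩,
    hP f hf ⟨C, hC⟩]
  have hsq_int : Integrable (fun y => ‖f y‖ ^ 2) P :=
    .of_bound (hf.norm.pow_const 2).aestronglyMeasurable (C ^ 2) (ae_of_all _ fun y => by
      simpa using pow_le_pow_left₀ (norm_nonneg (f y)) (hC y) 2)
  have hjensen : ‖∫ y, f y ∂P‖ ^ 2 ≤ ∫ y, ‖f y‖ ^ 2 ∂P :=
    ((convexOn_norm convex_univ).pow (fun _ _ => norm_nonneg _) 2).map_integral_le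
      (continuous_norm.pow 2).continuousOn isClosed_univ (ae_of_all _ fun _ => trivial)
      (.of_bound hf.aestronglyMeasurable C (ae_of_all _ hC)) hsq_int
  simp_rw [Complex.mul_conj', ← Complex.ofReal_pow, integral_complex_ofReal]
  exact Complex.real_le_real.mpr hjensen

theorem norm_sub_le_of_norm_sub_le (hM : IsMarkovOperator Φ) {h : U → ℂ} (hf : Measurable f)
    (hfb : ∃ C, ∀ y, ‖f y‖ ≤ C) (hh : Measurable h) (hhb : ∃ C, ∀ y, ‖h y‖ ≤ C) {c : ℂ}
    {ε b : ℝ} (hfh : ∀ y, ‖f y - c‖ ≤ ε - b * (h y).re) (x : U) :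
    ‖Φ f x - c‖ ≤ ε - b * (Φ h x).re := by
  obtain ⟨P, _, hP⟩ := hM x
  obtain ⟨C, hC⟩ := hfb
  obtain ⟨D, hD⟩ := hhb
  have hfi : Integrable f P := .of_bound hf.aestronglyMeasurable C (ae_of_all _ hC)
  have hhi : Integrable h P := .of_bound hh.aestronglyMeasurable D (ae_of_all _ hD)
  have hre : Integrable (fun y => (h y).re) P := hhi.re
  rw [hP f hf ⟨C, hC⟩, hP h hh ⟨D, hD⟩]
  calc ‖∫ y, f y ∂P - c‖ = ‖∫ y, (f y - c) ∂P‖ := by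
        rw [integral_sub hfi (integrable_const c)]; simp
    _ ≤ ∫ y, (ε - b * (h y).re) ∂P :=
        norm_integral_le_of_norm_le ((integrable_const ε).sub (hre.const_mul b))
          (ae_of_all _ hfh)
    _ = ε - b * (∫ y, h y ∂P).re := by
        have hint_re : ∫ y, (h y).re ∂P = (∫ y, h y ∂P).re := integral_re hhi
        rw [integral_sub (integrable_const ε) (hre.const_mul b), integral_const_mul, hint_re]
        simp

theorem tendsto_of_dominated_convergence (hM : IsMarkovOperator Φ) {F : ℕ → U → ℂ}
    (hF : ∀ n, Measurable (F n)) {C : ℝ} (hC : ∀ n y, ‖F n y‖ ≤ C)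
    (hlim : ∀ y, Tendsto (fun n => F n y) atTop (𝓝 (f y))) (x : U) :
    Tendsto (fun n => Φ (F n) x) atTop (𝓝 (Φ f x)) := by
  obtain ⟨P, _, hP⟩ := hM x
  have hf : Measurable f := measurable_of_tendsto_metrizable hF (tendsto_pi_nhds.mpr hlim)
  have hfC (y : U) : ‖f y‖ ≤ C :=
    le_of_tendsto ((continuous_norm.tendsto _).comp (hlim y)) (.of_forall fun n => hC n y)
  simp_rw [hP _ (hF _) ⟨C, hC _⟩, hP f hf ⟨C, hfC⟩]
  exact tendsto_integral_of_dominated_convergence (fun _ => C)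
    (fun n => (hF n).aestronglyMeasurable) (integrable_const C) (fun n => ae_of_all _ (hC n))
    (ae_of_all _ hlim)

end IsMarkovOperator

section PsiFun

variable {K : Type*} {U : Set K} {Φ : (U → ℂ) → (U → ℂ)}

theorem psiFun_of_mem {f : K → ℂ} {x : K} (hx : x ∈ U) :
    psiFun U Φ f x = Φ (fun v => f v) ⟨x, hx⟩ :=
  dif_pos hx

theorem psiFun_of_notMem {f : K → ℂ} {x : K} (hx : x ∉ U) : psiFun U Φ f x = f x :=
  dif_neg hx

theorem continuousOn_psiFun [TopologicalSpace K] [MeasurableSpace K] (hSF : HasStrongFeller Φ)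
    {f : K → ℂ} (hf : Measurable f) (hfb : ∃ C, ∀ y, ‖f y‖ ≤ C) :
    ContinuousOn (psiFun U Φ f) U := by
  obtain ⟨C, hC⟩ := hfb
  rw [continuousOn_iff_continuous_domRestrict]
  convert hSF _ (hf.comp measurable_subtype_coe) ⟨C, fun v => hC v⟩ using 1
  funext v
  exact psiFun_of_mem v.2

theorem continuous_of_barrier [TopologicalSpace K] (hU : IsOpen U) {g : K → ℂ}
    (hg : ContinuousOn g U)
    (hbar : ∀ x ∉ U, ∀ ε > 0, ∃ (b : ℝ) (h : C(K, ℂ)), h x = 0 ∧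
      ∀ y, ‖g y - g x‖ ≤ ε - b * (h y).re) :
    Continuous g := by
  refine continuous_iff_continuousAt.mpr fun x => ?_
  by_cases hx : x ∈ U
  · exact hg.continuousAt (hU.mem_nhds hx)
  rw [ContinuousAt, Metric.tendsto_nhds]
  intro ε hε
  obtain ⟨b, h, hx0, hbound⟩ := hbar x hx (ε / 2) (half_pos hε)
  have hlim : Tendsto (fun y => b * (h y).re) (𝓝 x) (𝓝 0) := by
    have hc : Continuous fun y => b * (h y).re := by fun_prop
    simpa [hx0] using hc.tendsto x
  filter_upwards [hlim (Ioi_mem_nhds (neg_lt_zero.mpr (half_pos hε)))] with y hy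
  rw [dist_eq_norm]
  linarith [hbound y, show -(ε / 2) < b * (h y).re from hy]

theorem exists_barrier_bound [TopologicalSpace K] [CompactSpace K] (hA : CondA U Φ) {x : K}
    (hx : x ∉ U) (f : C(K, ℂ)) {ε : ℝ} (hε : 0 < ε) :
    ∃ b : ℝ, 0 ≤ b ∧ ∃ h : C(K, ℂ), h x = 0 ∧ (∀ u : U, h u ≤ Φ (fun v => h v) u) ∧
      ∀ y, ‖f y - f x‖ ≤ ε - b * (h y).re := by
  obtain ⟨h, hx0, hneg, hsub⟩ := hA x hx
  have hre_nonpos (y : K) : (h y).re ≤ 0 := by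
    rcases eq_or_ne y x with rfl | hy
    · simp [hx0]
    · exact (Complex.lt_def.mp (hneg y hy)).1.le
  set V := {y | ε ≤ ‖f y - f x‖}
  have hV : IsClosed V := isClosed_le continuous_const (by fun_prop)
  have hre_neg (y : K) (hy : y ∈ V) : 0 < -(h y).re := by
    refine neg_pos.mpr (Complex.lt_def.mp (hneg y ?_)).1
    rintro rfl
    have hy' : ε ≤ ‖f y - f y‖ := hy
    rw [sub_self, norm_zero] at hy'
    linarith
  obtain ⟨C, hC⟩ := hV.isCompact.bddAbove_image (f := fun y => ‖f y - f x‖ / -(h y).re)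
    (ContinuousOn.div (by fun_prop) (by fun_prop) fun y hy => (hre_neg y hy).ne')
  refine ⟨max C 0, le_max_right _ _, h, hx0, hsub, fun y => ?_⟩
  by_cases hy : y ∈ V
  · have hCy := hC (Set.mem_image_of_mem _ hy)
    rw [div_le_iff₀ (hre_neg y hy)] at hCy
    nlinarith [le_max_left C 0, hre_neg y hy]
  · nlinarith [not_le.mp (show ¬ε ≤ ‖f y - f x‖ from hy), le_max_right C 0, hre_nonpos y]

end PsiFun

theorem ContinuousMap.measurable_restrict {K : Type*} [TopologicalSpace K] [MeasurableSpace K]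
    [OpensMeasurableSpace K] (f : C(K, ℂ)) (U : Set K) : Measurable fun v : U => f v :=
  f.continuous.measurable.comp measurable_subtype_coe

theorem ContinuousMap.exists_norm_restrict_le {K : Type*} [TopologicalSpace K] [CompactSpace K]
    (f : C(K, ℂ)) (U : Set K) : ∃ C, ∀ v : U, ‖f v‖ ≤ C :=
  ⟨‖f‖, fun v => f.norm_coe_le_norm v⟩

theorem ContinuousMap.mul_eq_sum_mul_star {K : Type*} [TopologicalSpace K] (f g : C(K, ℂ)) :
    f * g = ∑ k ∈ Finset.range 4,
      (Complex.I ^ k / 4) • ((f + Complex.I ^ k • star g) * star (f + Complex.I ^ k • star g)) := by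
  ext y
  simpa using Complex.mul_eq_sum_mul_conj (f y) (g y)

section PsiLinearMap

variable {K : Type*} [TopologicalSpace K] [CompactSpace K] [MeasurableSpace K]
  [OpensMeasurableSpace K] {U : Set K} {Φ : (U → ℂ) → (U → ℂ)}

theorem psiFun_add (hM : IsMarkovOperator Φ) (f g : C(K, ℂ)) :
    psiFun U Φ ⇑(f + g) = psiFun U Φ f + psiFun U Φ g := by
  funext y
  by_cases hy : y ∈ U
  · simp only [Pi.add_apply, psiFun_of_mem hy]
    exact hM.map_add (f.measurable_restrict U) (f.exists_norm_restrict_le U)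
      (g.measurable_restrict U) (g.exists_norm_restrict_le U) _
  · simp only [Pi.add_apply, psiFun_of_notMem hy, ContinuousMap.add_apply]

theorem psiFun_smul (hM : IsMarkovOperator Φ) (c : ℂ) (f : C(K, ℂ)) :
    psiFun U Φ ⇑(c • f) = c • psiFun U Φ f := by
  funext y
  by_cases hy : y ∈ U
  · simp only [Pi.smul_apply, psiFun_of_mem hy, smul_eq_mul]
    exact hM.map_const_mul (f.measurable_restrict U) (f.exists_norm_restrict_le U) c _
  · simp only [Pi.smul_apply, psiFun_of_notMem hy, ContinuousMap.smul_apply]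

theorem psiFun_mono (hM : IsMarkovOperator Φ) {f g : C(K, ℂ)} (hfg : f ≤ g) :
    psiFun U Φ f ≤ psiFun U Φ g := by
  intro y
  by_cases hy : y ∈ U
  · rw [psiFun_of_mem hy, psiFun_of_mem hy]
    exact hM.mono (f.measurable_restrict U) (f.exists_norm_restrict_le U)
      (g.measurable_restrict U) (g.exists_norm_restrict_le U) (fun v => hfg v) _
  · rw [psiFun_of_notMem hy, psiFun_of_notMem hy]
    exact hfg y

theorem norm_psiFun_le (hM : IsMarkovOperator Φ) (f : C(K, ℂ)) (y : K) :
    ‖psiFun U Φ f y‖ ≤ ‖f‖ := by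
  by_cases hy : y ∈ U
  · rw [psiFun_of_mem hy]
    exact hM.norm_le (f.measurable_restrict U) (fun v => f.norm_coe_le_norm v) _
  · rw [psiFun_of_notMem hy]
    exact f.norm_coe_le_norm y

theorem norm_psiFun_sub_le (hM : IsMarkovOperator Φ) {h : C(K, ℂ)}
    (hsub : ∀ u : U, h u ≤ Φ (fun v => h v) u) {b ε : ℝ} (hb : 0 ≤ b) {c : ℂ} {f : C(K, ℂ)}
    (hf : ∀ y, ‖f y - c‖ ≤ ε - b * (h y).re) (y : K) :
    ‖psiFun U Φ f y - c‖ ≤ ε - b * (h y).re := by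
  by_cases hy : y ∈ U
  · rw [psiFun_of_mem hy]
    calc _ ≤ ε - b * (Φ (fun v => h v) ⟨y, hy⟩).re :=
          hM.norm_sub_le_of_norm_sub_le (f.measurable_restrict U) (f.exists_norm_restrict_le U)
            (h.measurable_restrict U) (h.exists_norm_restrict_le U) (fun v => hf v) _
      _ ≤ ε - b * (h y).re := by gcongr; exact hsub ⟨y, hy⟩
  · rw [psiFun_of_notMem hy]
    exact hf y

theorem continuous_psiFun (hU : IsOpen U) (hM : IsMarkovOperator Φ) (hSF : HasStrongFeller Φ)
    (hA : CondA U Φ) (f : C(K, ℂ)) : Continuous (psiFun U Φ f) := by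
  refine continuous_of_barrier hU
    (continuousOn_psiFun hSF f.continuous.measurable ⟨‖f‖, f.norm_coe_le_norm⟩)
    fun x hx ε hε => ?_
  obtain ⟨b, hb, h, hx0, hsub, hbound⟩ := exists_barrier_bound hA hx f hε
  refine ⟨b, h, hx0, fun y => ?_⟩
  rw [psiFun_of_notMem hx]
  exact norm_psiFun_sub_le hM hsub hb hbound y

variable (hU : IsOpen U) (hM : IsMarkovOperator Φ) (hSF : HasStrongFeller Φ) (hA : CondA U Φ)

noncomputable def psiLinearMap : Module.End ℂ C(K, ℂ) where
  toFun f := ⟨psiFun U Φ f, continuous_psiFun hU hM hSF hA f⟩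
  map_add' f g := ContinuousMap.ext fun y => congrFun (psiFun_add hM f g) y
  map_smul' c f := ContinuousMap.ext fun y => congrFun (psiFun_smul hM c f) y

theorem coe_psiLinearMap_pow (f : C(K, ℂ)) (n : ℕ) :
    ⇑((psiLinearMap hU hM hSF hA ^ n) f) = (psiFun U Φ)^[n] f := by
  induction n with
  | zero => rfl
  | succ n ih =>
    rw [pow_succ', Module.End.mul_apply, Function.iterate_succ_apply', ← ih]
    rfl

end PsiLinearMap

theorem psiFun_eq_of_tendsto {K : Type*} [TopologicalSpace K] [MeasurableSpace K]
    [OpensMeasurableSpace K] {U : Set K} {Φ : (U → ℂ) → (U → ℂ)} (hM : IsMarkovOperator Φ)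
    {F : ℕ → C(K, ℂ)} (hF : ∀ n, ⇑(F (n + 1)) = psiFun U Φ (F n)) {C : ℝ}
    (hC : ∀ n y, ‖F n y‖ ≤ C) {G : K → ℂ} (hlim : ∀ y, Tendsto (fun n => F n y) atTop (𝓝 (G y))) :
    psiFun U Φ G = G := by
  funext x
  by_cases hx : x ∈ U
  · rw [psiFun_of_mem hx]
    refine tendsto_nhds_unique (hM.tendsto_of_dominated_convergence
      (fun n => (F n).measurable_restrict U) (fun n v => hC n v) (fun v => hlim v) _) ?_
    simp_rw [← psiFun_of_mem hx, ← hF]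
    exact (hlim x).comp (tendsto_add_atTop_nat 1)
  · exact psiFun_of_notMem hx

section Orbits

variable {K : Type*} [TopologicalSpace K] [CompactSpace K] [MeasurableSpace K]
  [OpensMeasurableSpace K] {U : Set K} {Φ : (U → ℂ) → (U → ℂ)}
  (hU : IsOpen U) (hM : IsMarkovOperator Φ) (hSF : HasStrongFeller Φ) (hA : CondA U Φ)

local notation "Ψ" => psiLinearMap hU hM hSF hA

theorem psiLinearMap_star {f : C(K, ℂ)} (hf : Ψ f = f) : Ψ (star f) = star f := by
  ext y
  by_cases hy : y ∈ U
  · have hfy : f y = Φ (fun v => f v) ⟨y, hy⟩ :=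
      (DFunLike.congr_fun hf y).symm.trans (psiFun_of_mem hy)
    change psiFun U Φ _ y = _
    rw [psiFun_of_mem hy, ContinuousMap.star_apply, hfy]
    exact hM.map_conj (f.measurable_restrict U) (f.exists_norm_restrict_le U) _
  · exact psiFun_of_notMem hy

theorem monotone_psiLinearMap_pow (n : ℕ) : Monotone ⇑(Ψ ^ n) := by
  have hmono : Monotone ⇑Ψ := fun _ _ hfg y => psiFun_mono hM hfg y
  rw [Module.End.coe_pow]
  exact hmono.iterate n

theorem norm_psiLinearMap_pow_apply_le (f : C(K, ℂ)) (n : ℕ) : ‖(Ψ ^ n) f‖ ≤ ‖f‖ := by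
  induction n with
  | zero => simp
  | succ n ih =>
    rw [pow_succ', Module.End.mul_apply]
    exact ((ContinuousMap.norm_le _ (norm_nonneg _)).mpr (norm_psiFun_le hM _)).trans ih

theorem psiLinearMap_pow_apply_of_notMem (f : C(K, ℂ)) {x : K} (hx : x ∉ U) (n : ℕ) :
    (Ψ ^ n) f x = f x := by
  induction n with
  | zero => simp
  | succ n ih =>
    rw [pow_succ', Module.End.mul_apply]
    exact (psiFun_of_notMem hx).trans ih

theorem norm_psiLinearMap_pow_apply_sub_le {h : C(K, ℂ)}
    (hsub : ∀ u : U, h u ≤ Φ (fun v => h v) u) {b ε : ℝ} (hb : 0 ≤ b) {c : ℂ} {f : C(K, ℂ)}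
    (hf : ∀ y, ‖f y - c‖ ≤ ε - b * (h y).re) (n : ℕ) (y : K) :
    ‖(Ψ ^ n) f y - c‖ ≤ ε - b * (h y).re := by
  induction n generalizing y with
  | zero => exact hf y
  | succ n ih =>
    rw [pow_succ', Module.End.mul_apply]
    exact norm_psiFun_sub_le hM hsub hb ih y

theorem continuous_of_tendsto_psiLinearMap_pow {s : C(K, ℂ)} {G : K → ℂ}
    (hlim : ∀ y, Tendsto (fun n => (Ψ ^ n) s y) atTop (𝓝 (G y))) : Continuous G := by
  have hC (n : ℕ) (y : K) : ‖(Ψ ^ n) s y‖ ≤ ‖s‖ :=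
    (((Ψ ^ n) s).norm_coe_le_norm y).trans (norm_psiLinearMap_pow_apply_le hU hM hSF hA s n)
  have hG : Measurable G := measurable_of_tendsto_metrizable
    (fun n => ((Ψ ^ n) s).continuous.measurable) (tendsto_pi_nhds.mpr hlim)
  have hGC (y : K) : ‖G y‖ ≤ ‖s‖ :=
    le_of_tendsto ((continuous_norm.tendsto _).comp (hlim y)) (.of_forall fun n => hC n y)
  have hfix : psiFun U Φ G = G := psiFun_eq_of_tendsto hM
    (fun n => by rw [pow_succ', Module.End.mul_apply]; rfl) hC hlim
  refine continuous_of_barrier hU ((continuousOn_psiFun hSF hG ⟨_, hGC⟩).congr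
    fun y _ => (congrFun hfix y).symm) fun x hx ε hε => ?_
  obtain ⟨b, hb, h, hx0, hsub, hbound⟩ := exists_barrier_bound hA hx s hε
  have hGx : G x = s x := tendsto_nhds_unique (hlim x)
    (by simp only [psiLinearMap_pow_apply_of_notMem hU hM hSF hA s hx, tendsto_const_nhds])
  refine ⟨b, h, hx0, fun y => hGx ▸ ?_⟩
  exact le_of_tendsto (((continuous_norm.comp (continuous_sub_right _)).tendsto _).comp (hlim y))
    (.of_forall fun n => norm_psiLinearMap_pow_apply_sub_le hU hM hSF hA hsub hb hbound n y)

theorem mem_convergentOrbits_of_le {s : C(K, ℂ)} (hs : s ≤ Ψ s) :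
    s ∈ (Ψ).convergentOrbits := by
  have hmono : Monotone fun n => (Ψ ^ n) s := monotone_nat_of_le_succ fun n => by
    rw [pow_succ, Module.End.mul_apply]
    exact monotone_psiLinearMap_pow hU hM hSF hA n hs
  have hlim (y : K) : ∃ l, Tendsto (fun n => (Ψ ^ n) s y) atTop (𝓝 l) :=
    Complex.exists_tendsto_of_monotone (fun _ _ hmn => hmono hmn y) fun n =>
      (((Ψ ^ n) s).norm_coe_le_norm y).trans (norm_psiLinearMap_pow_apply_le hU hM hSF hA s n)
  choose G hG using hlim
  have hGc := continuous_of_tendsto_psiLinearMap_pow hU hM hSF hA hG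
  exact ⟨⟨G, hGc⟩, ContinuousMap.tendsto_iff_tendstoUniformly.mpr
    (Complex.tendstoUniformly_of_monotone (fun n => ((Ψ ^ n) s).continuous)
      (fun _ _ hmn => hmono hmn) hGc hG)⟩

theorem mul_star_mem_convergentOrbits {w : C(K, ℂ)} (hw : Ψ w = w) :
    w * star w ∈ (Ψ).convergentOrbits := by
  refine mem_convergentOrbits_of_le hU hM hSF hA fun y => ?_
  by_cases hy : y ∈ U
  · have hwy : w y = Φ (fun v => w v) ⟨y, hy⟩ :=
      (DFunLike.congr_fun hw y).symm.trans (psiFun_of_mem hy)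
    change w y * star (w y) ≤ psiFun U Φ _ y
    rw [psiFun_of_mem hy, hwy]
    exact hM.mul_conj_le (w.measurable_restrict U) (w.exists_norm_restrict_le U) _
  · exact (psiFun_of_notMem hy).symm.le

end Orbits

theorem stmt9_general {K : Type*} [MetricSpace K] [CompactSpace K]
    [MeasurableSpace K] [BorelSpace K]
    (U : Set K) (hUopen : IsOpen U)
    (Φ : (↥U → ℂ) → (↥U → ℂ))
    (hM : IsMarkovOperator Φ) (hSF : HasStrongFeller Φ)
    (hA : CondA U Φ)
    (h₁ h₂ : C(K, ℂ))
    (hfix₁ : psiFun U Φ ⇑h₁ = ⇑h₁) (hfix₂ : psiFun U Φ ⇑h₂ = ⇑h₂) :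
    ∃ p : K → ℂ,
      TendstoUniformly (fun n x => (psiFun U Φ)^[n] (fun y => h₁ y * h₂ y) x)
        p atTop := by
  set L := psiLinearMap hUopen hM hSF hA
  have hL₁ : L h₁ = h₁ := ContinuousMap.ext (congrFun hfix₁)
  have hL₂ : L (star h₂) = star h₂ :=
    psiLinearMap_star hUopen hM hSF hA (ContinuousMap.ext (congrFun hfix₂))
  have hmem : h₁ * h₂ ∈ L.convergentOrbits := by
    rw [ContinuousMap.mul_eq_sum_mul_star h₁ h₂]
    refine Submodule.sum_mem _ fun k _ => Submodule.smul_mem _ _ ?_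
    exact mul_star_mem_convergentOrbits hUopen hM hSF hA (by rw [map_add, map_smul, hL₁, hL₂])
  obtain ⟨p, hp⟩ := hmem
  refine ⟨p, ?_⟩
  have hunif := ContinuousMap.tendsto_iff_tendstoUniformly.mp hp
  simp only [L, coe_psiLinearMap_pow] at hunif
  exact hunif

/-- If `h₁, h₂ ∈ C(K)` are fixed by `Ψ`, then `{Ψⁿ (h₁ h₂)}`
converges uniformly on `K`. -/
theorem stmt9 {K : Type*} [MetricSpace K] [CompactSpace K]
    [MeasurableSpace K] [BorelSpace K]
    (U : Set K) (hUopen : IsOpen U) (hUdense : Dense U)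
    (hbd : ∃ a b : K, a ∈ Uᶜ ∧ b ∈ Uᶜ ∧ a ≠ b)
    (Φ : (↥U → ℂ) → (↥U → ℂ))
    (hM : IsMarkovOperator Φ) (hSF : HasStrongFeller Φ)
    (hA : CondA U Φ)
    (h₁ h₂ : C(K, ℂ))
    (hfix₁ : psiFun U Φ ⇑h₁ = ⇑h₁) (hfix₂ : psiFun U Φ ⇑h₂ = ⇑h₂) :
    ∃ p : K → ℂ,
      TendstoUniformly (fun n x => (psiFun U Φ)^[n] (fun y => h₁ y * h₂ y) x)
        p atTop :=
  stmt9_general U hUopen Φ hM hSF hA h₁ h₂ hfix₁ hfix₂
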